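/- arXiv:1901.06897 — 5 statements merged into one kernel-verified Lean document; each statement's English description precedes it below -/
import Mathlib

section
/- Let (x_n) be a monotone increasing sequence in [0,+∞]. Then for λ ∈ (0,1), the quantity (1-λ)·∑_{n=1}^∞ λ^n x_n is monotone increasing in λ, and its limit as λ ↑ 1 equals sup_{n≥1} x_n. -/
/-!
Write `x_{n+1} = d_0 + ⋯ + d_n` with nonnegative increments `d_n`. Interchanging the order of
summation (a Cauchy product with the geometric series `∑ λ^j = (1 - λ)⁻¹`) gives
`(1 - λ) ∑ λ^{n+1} x_{n+1} = ∑ λ^{n+1} d_n`, which is visibly monotone in `λ`. A sum of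
nonnegative continuous functions is lower semicontinuous, so as `λ ↑ 1` it tends to its value
`∑ d_n = sup x_{n+1}` at `λ = 1`.
-/

open scoped ENNReal
open Filter Set Topology Finset

theorem Monotone.tendsto_nhdsLT_of_lowerSemicontinuousAt {α β : Type*} [TopologicalSpace α]
    [Preorder α] [TopologicalSpace β] [LinearOrder β] [OrderTopology β] {f : α → β}
    (hf : Monotone f) {a : α} (ha : LowerSemicontinuousAt f a) :
    Tendsto f (𝓝[<] a) (𝓝 (f a)) :=
  tendsto_order.2 ⟨fun _ hy => nhdsWithin_le_nhds (ha _ hy),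
    fun _ hy => eventually_nhdsWithin_of_forall fun _ hl => (hf (le_of_lt hl)).trans_lt hy⟩

section Increments

variable {α : Type*} [AddCommMonoid α] [PartialOrder α] [CanonicallyOrderedAdd α] [Sub α]
  [OrderedSub α]

def increments (y : ℕ → α) : ℕ → α
  | 0 => y 0
  | n + 1 => y (n + 1) - y n

theorem sum_range_succ_increments {y : ℕ → α} (hy : Monotone y) (n : ℕ) :
    ∑ k ∈ range (n + 1), increments y k = y n := by
  induction n with
  | zero => simp [increments]
  | succ n ih => rw [sum_range_succ, ih, increments, add_tsub_cancel_of_le (hy n.le_succ)]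

end Increments

namespace ENNReal

theorem tsum_increments {y : ℕ → ℝ≥0∞} (hy : Monotone y) :
    ∑' n, increments y n = ⨆ n, y n := by
  rw [ENNReal.tsum_eq_iSup_nat' (tendsto_add_atTop_nat 1)]
  simp only [sum_range_succ_increments hy]

theorem tsum_mul_tsum_eq_tsum_sum_range (f g : ℕ → ℝ≥0∞) :
    (∑' n, f n) * ∑' n, g n = ∑' n, ∑ k ∈ range (n + 1), f k * g (n - k) := by
  simp_rw [← ENNReal.tsum_mul_right, ← ENNReal.tsum_mul_left,
    ← Nat.sum_antidiagonal_eq_sum_range_succ fun k j => f k * g j]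
  rw [← ENNReal.tsum_prod, ← HasAntidiagonal.sigmaAntidiagonalEquivProd.tsum_eq,
    ENNReal.tsum_sigma']
  refine tsum_congr fun n => ?_
  rw [← Finset.sum_finset_coe, ← tsum_fintype (L := .unconditional _)]
  rfl

theorem one_sub_mul_tsum_pow_mul_sum_range (d : ℕ → ℝ≥0∞) {l : ℝ≥0∞} (hl : l < 1) :
    (1 - l) * ∑' n, l ^ (n + 1) * ∑ k ∈ range (n + 1), d k = ∑' n, l ^ (n + 1) * d n := by
  have cauchy : (∑' n, l ^ (n + 1) * d n) * ∑' n, l ^ n =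
      ∑' n, l ^ (n + 1) * ∑ k ∈ range (n + 1), d k := by
    rw [tsum_mul_tsum_eq_tsum_sum_range]
    refine tsum_congr fun n => ?_
    rw [mul_sum]
    refine sum_congr rfl fun k hk => ?_
    rw [mul_right_comm, ← pow_add, Nat.add_right_comm,
      Nat.add_sub_cancel' (mem_range_succ_iff.1 hk)]
  rw [← cauchy, ENNReal.tsum_geometric, mul_comm, mul_assoc,
    ENNReal.inv_mul_cancel (tsub_pos_of_lt hl).ne' (sub_ne_top one_ne_top), mul_one]

theorem monotone_tsum_pow_mul (d : ℕ → ℝ≥0∞) :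
    Monotone fun l : ℝ≥0∞ => ∑' n, l ^ (n + 1) * d n :=
  fun _ _ h => ENNReal.tsum_le_tsum fun _ => by gcongr

theorem lowerSemicontinuousAt_tsum_pow_mul (d : ℕ → ℝ≥0∞) {a : ℝ≥0∞} (ha : a ≠ 0) :
    LowerSemicontinuousAt (fun l : ℝ≥0∞ => ∑' n, l ^ (n + 1) * d n) a :=
  lowerSemicontinuousAt_tsum fun n => ContinuousAt.lowerSemicontinuousAt <|
    ENNReal.Tendsto.mul_const ((ENNReal.continuous_pow (n + 1)).tendsto a)
      (Or.inl (pow_ne_zero _ ha))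

theorem tendsto_tsum_pow_mul_nhdsLT_one (d : ℕ → ℝ≥0∞) :
    Tendsto (fun l : ℝ≥0∞ => ∑' n, l ^ (n + 1) * d n) (𝓝[<] 1) (𝓝 (∑' n, d n)) := by
  simpa using (monotone_tsum_pow_mul d).tendsto_nhdsLT_of_lowerSemicontinuousAt
    (lowerSemicontinuousAt_tsum_pow_mul d one_ne_zero)

end ENNReal

/-- For a monotone increasing sequence `x` in `[0,∞]`, the quantity
`(1-λ) ∑_{n=1}^∞ λ^n x_n` is monotone increasing in `λ ∈ (0,1)`, and its limit
as `λ ↑ 1` equals `sup_{n ≥ 1} x_n`. -/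
theorem stmt0 (x : ℕ → ℝ≥0∞) (hx : Monotone x) :
    (∀ l₁ l₂ : ℝ≥0∞, 0 < l₁ → l₁ < l₂ → l₂ < 1 →
      (1 - l₁) * ∑' n : ℕ, l₁ ^ (n + 1) * x (n + 1) ≤
        (1 - l₂) * ∑' n : ℕ, l₂ ^ (n + 1) * x (n + 1)) ∧
    Filter.Tendsto (fun l : ℝ≥0∞ => (1 - l) * ∑' n : ℕ, l ^ (n + 1) * x (n + 1))
      (nhdsWithin 1 (Set.Iio 1)) (nhds (⨆ n : ℕ, x (n + 1))) := by
  have hy : Monotone fun n => x (n + 1) := fun _ _ h => hx (Nat.succ_le_succ h)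
  have abel : ∀ l < 1, (1 - l) * ∑' n, l ^ (n + 1) * x (n + 1) =
      ∑' n, l ^ (n + 1) * increments (fun n => x (n + 1)) n := fun l hl => by
    simpa only [sum_range_succ_increments hy] using
      ENNReal.one_sub_mul_tsum_pow_mul_sum_range (increments fun n => x (n + 1)) hl
  refine ⟨fun l₁ l₂ _ h₁₂ h₂ => ?_, ?_⟩
  · rw [abel l₁ (h₁₂.trans h₂), abel l₂ h₂]
    exact ENNReal.monotone_tsum_pow_mul _ h₁₂.le
  · rw [← ENNReal.tsum_increments hy]
    refine (ENNReal.tendsto_tsum_pow_mul_nhdsLT_one _).congr' ?_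
    filter_upwards [self_mem_nhdsWithin] with l hl using (abel l hl).symm
end

section
/- Let (x_n) be a sequence of nonnegative reals, (λ_i) ⊆ (0,1) with λ_i ↑ 1, and Φ : ℕ → ℕ increasing with (1-λ_i)·Φ(i) ≥ i for all i ≥ 1. If x_n converges to a limit L ∈ [0,+∞], then lim_{i→∞} (1-λ_i)·∑_{n=1}^{Φ(i)} λ_i^n x_n = L. -/
/-!
Write `S_i = (1 - λ_i) ∑_{n=1}^{Φ(i)} λ_i^n x_n`. The weights `(1 - λ_i) λ_i^n` sum to at
most `1`, so `S_i ≤ L`. Conversely, by monotonicity `S_i ≥ x_m (λ_i^m - λ_i^{Φ(i)+1})` for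
every fixed `m ≤ Φ(i)`. Here `λ_i^m → 1`, and `λ_i^{Φ(i)+1} ≤ exp (-(1 - λ_i) Φ(i)) ≤ exp (-i)`
tends to `0`, so eventually `S_i` exceeds anything below `x_m`, hence anything below `L = sup x_m`.
-/

open scoped ENNReal Topology
open Filter Finset

lemma one_sub_mul_sum_Icc_pow {R : Type*} [CommRing R] (a : R) {m N : ℕ} (h : m ≤ N + 1) :
    (1 - a) * ∑ n ∈ Icc m N, a ^ n = a ^ m - a ^ (N + 1) := by
  rw [mul_comm, ← Ico_add_one_right_eq_Icc, geom_sum_Ico_mul_neg a h]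

section WeightedMean

variable {x : ℕ → ℝ} {a : ℝ}

lemma one_sub_mul_sum_Icc_pow_mul_le {M : ℝ} (hM : 0 ≤ M) (hxM : ∀ n, x n ≤ M)
    (ha0 : 0 ≤ a) (ha1 : a ≤ 1) (N : ℕ) :
    (1 - a) * ∑ n ∈ Icc 1 N, a ^ n * x n ≤ M := by
  have h1a : 0 ≤ 1 - a := sub_nonneg.2 ha1
  calc (1 - a) * ∑ n ∈ Icc 1 N, a ^ n * x n
      ≤ (1 - a) * ∑ n ∈ Icc 1 N, a ^ n * M := by gcongr with n; exact hxM n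
    _ = (a - a ^ (N + 1)) * M := by
      rw [← sum_mul, ← mul_assoc, one_sub_mul_sum_Icc_pow a (by omega), pow_one]
    _ ≤ 1 * M := by gcongr; linarith [pow_nonneg ha0 (N + 1)]
    _ = M := one_mul M

lemma mul_sub_pow_le_one_sub_mul_sum_Icc (hx0 : ∀ n, 0 ≤ x n) (hx : Monotone x)
    (ha0 : 0 ≤ a) (ha1 : a ≤ 1) {m N : ℕ} (hm : 1 ≤ m) (hmN : m ≤ N) :
    x m * (a ^ m - a ^ (N + 1)) ≤ (1 - a) * ∑ n ∈ Icc 1 N, a ^ n * x n := by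
  have h1a : 0 ≤ 1 - a := sub_nonneg.2 ha1
  calc x m * (a ^ m - a ^ (N + 1))
      = (1 - a) * ∑ n ∈ Icc m N, a ^ n * x m := by
        rw [← sum_mul, ← mul_assoc, one_sub_mul_sum_Icc_pow a (by omega), mul_comm]
    _ ≤ (1 - a) * ∑ n ∈ Icc m N, a ^ n * x n := by
        gcongr with n hn; exact hx (mem_Icc.1 hn).1
    _ ≤ (1 - a) * ∑ n ∈ Icc 1 N, a ^ n * x n := by
        gcongr
        exact fun n _ _ => mul_nonneg (pow_nonneg ha0 n) (hx0 n)

end WeightedMean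

lemma pow_le_exp_neg_one_sub_mul {a : ℝ} (ha : 0 ≤ a) (N : ℕ) :
    a ^ N ≤ Real.exp (-((1 - a) * N)) :=
  calc a ^ N ≤ Real.exp (-(1 - a)) ^ N := by
        gcongr; linarith [Real.one_sub_le_exp_neg (1 - a)]
    _ = Real.exp (-((1 - a) * N)) := by rw [← Real.exp_nat_mul]; ring_nf

lemma tendsto_pow_nhds_zero_of_tendsto_one_sub_mul {ι : Type*} {f : Filter ι} {a : ι → ℝ}
    {N : ι → ℕ} (ha : ∀ i, 0 ≤ a i) (h : Tendsto (fun i => (1 - a i) * N i) f atTop) :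
    Tendsto (fun i => a i ^ N i) f (𝓝 0) :=
  squeeze_zero (fun i => pow_nonneg (ha i) _) (fun i => pow_le_exp_neg_one_sub_mul (ha i) _)
    (Real.tendsto_exp_neg_atTop_nhds_zero.comp h)

theorem stmt3_general (x : ℕ → ℝ) (hx0 : ∀ n, 0 ≤ x n) (hxmono : Monotone x)
    (l : ℕ → ℝ) (hl : ∀ i, l i ∈ Set.Ioo (0 : ℝ) 1)
    (hl1 : Filter.Tendsto l Filter.atTop (nhds 1))
    (Φ : ℕ → ℕ)
    (hΦ : ∀ i : ℕ, 1 ≤ i → (i : ℝ) ≤ (1 - l i) * (Φ i : ℝ))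
    (L : ℝ≥0∞)
    (hL : Filter.Tendsto (fun n => ENNReal.ofReal (x n)) Filter.atTop (nhds L)) :
    Filter.Tendsto
      (fun i => ENNReal.ofReal ((1 - l i) * ∑ n ∈ Finset.Icc 1 (Φ i), l i ^ n * x n))
      Filter.atTop (nhds L) := by
  have hl_nonneg i : 0 ≤ l i := (hl i).1.le
  have hl_le_one i : l i ≤ 1 := (hl i).2.le
  have hxL : ∀ n, ENNReal.ofReal (x n) ≤ L := (ENNReal.ofReal_mono.comp hxmono).ge_of_tendsto hL
  have hΦ_ge i (hi : 1 ≤ i) : i ≤ Φ i := by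
    exact_mod_cast (hΦ i hi).trans
      (mul_le_of_le_one_left (Nat.cast_nonneg _) (by linarith [hl_nonneg i]))
  have htail : Tendsto (fun i => l i ^ (Φ i + 1)) atTop (𝓝 0) := by
    refine tendsto_pow_nhds_zero_of_tendsto_one_sub_mul hl_nonneg
      (tendsto_atTop_mono' atTop ?_ tendsto_natCast_atTop_atTop)
    filter_upwards [eventually_ge_atTop 1] with i hi
    calc (i : ℝ) ≤ (1 - l i) * Φ i := hΦ i hi
      _ ≤ (1 - l i) * ↑(Φ i + 1) := by gcongr <;> [linarith [hl_le_one i]; omega]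
  refine tendsto_order.2 ⟨fun b hb => ?_, fun b hb => Eventually.of_forall fun i => ?_⟩
  · obtain ⟨m, hbm, hm⟩ :=
      ((hL.eventually (lt_mem_nhds hb)).and (eventually_ge_atTop 1)).exists
    have hlower : Tendsto (fun i => ENNReal.ofReal (x m * (l i ^ m - l i ^ (Φ i + 1)))) atTop
        (𝓝 (ENNReal.ofReal (x m))) := by
      simpa using ENNReal.tendsto_ofReal (((hl1.pow m).sub htail).const_mul (x m))
    filter_upwards [hlower.eventually (lt_mem_nhds hbm), eventually_ge_atTop m] with i hi hmi
    exact hi.trans_le <| ENNReal.ofReal_le_ofReal <| mul_sub_pow_le_one_sub_mul_sum_Icc hx0 hxmono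
      (hl_nonneg i) (hl_le_one i) hm (hmi.trans (hΦ_ge i (hm.trans hmi)))
  · refine lt_of_le_of_lt ((ENNReal.ofReal_le_iff_le_toReal hb.ne_top).2 ?_) hb
    exact one_sub_mul_sum_Icc_pow_mul_le ENNReal.toReal_nonneg
      (fun n => (ENNReal.ofReal_le_iff_le_toReal hb.ne_top).1 (hxL n)) (hl_nonneg i) (hl_le_one i) _

/-- Let `x` be a monotone increasing sequence of nonnegative reals, `λ_i ∈ (0,1)`
with `λ_i ↑ 1`, and `Φ : ℕ → ℕ` increasing with `(1-λ_i)·Φ(i) ≥ i` for all `i ≥ 1`.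
If `x_n → L ∈ [0,∞]`, then `(1-λ_i)·∑_{n=1}^{Φ(i)} λ_i^n x_n → L` as `i → ∞`. -/
theorem stmt3 (x : ℕ → ℝ) (hx0 : ∀ n, 0 ≤ x n) (hxmono : Monotone x)
    (l : ℕ → ℝ) (hl : ∀ i, l i ∈ Set.Ioo (0 : ℝ) 1) (hlmono : Monotone l)
    (hl1 : Filter.Tendsto l Filter.atTop (nhds 1))
    (Φ : ℕ → ℕ) (hΦmono : Monotone Φ)
    (hΦ : ∀ i : ℕ, 1 ≤ i → (i : ℝ) ≤ (1 - l i) * (Φ i : ℝ))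
    (L : ℝ≥0∞)
    (hL : Filter.Tendsto (fun n => ENNReal.ofReal (x n)) Filter.atTop (nhds L)) :
    Filter.Tendsto
      (fun i => ENNReal.ofReal ((1 - l i) * ∑ n ∈ Finset.Icc 1 (Φ i), l i ^ n * x n))
      Filter.atTop (nhds L) :=
  stmt3_general x hx0 hxmono l hl hl1 Φ hΦ L hL
end

section
/- For real numbers a, b, c, the function A₂(x,y,z) = (a−x)² + (a−z)² + (x−z)² + (b−x)² + (b−y)² + (x−y)² + (c−y)² + (c−z)² + (y−z)² attains its minimum over (x,y,z) ∈ ℝ³ at x = (2a+2b+c)/5, y = (a+2b+2c)/5, z = (2a+b+2c)/5, and the minimum value equals (3/5)·[(a−b)² + (b−c)² + (a−c)²]. -/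
/-- The harmonic-extension minimization on the Sierpiński gasket: the function
`A₂(x,y,z) = (a−x)²+(a−z)²+(x−z)²+(b−x)²+(b−y)²+(x−y)²+(c−y)²+(c−z)²+(y−z)²`
attains its minimum at `x = (2a+2b+c)/5, y = (a+2b+2c)/5, z = (2a+b+2c)/5`,
with minimum value `(3/5)[(a−b)²+(b−c)²+(a−c)²]`. -/
theorem stmt7 (a b c : ℝ) :
    (∀ x y z : ℝ,
      3 / 5 * ((a - b) ^ 2 + (b - c) ^ 2 + (a - c) ^ 2) ≤
        (a - x) ^ 2 + (a - z) ^ 2 + (x - z) ^ 2 +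
        ((b - x) ^ 2 + (b - y) ^ 2 + (x - y) ^ 2) +
        ((c - y) ^ 2 + (c - z) ^ 2 + (y - z) ^ 2)) ∧
    (let x := (2 * a + 2 * b + c) / 5
     let y := (a + 2 * b + 2 * c) / 5
     let z := (2 * a + b + 2 * c) / 5
     (a - x) ^ 2 + (a - z) ^ 2 + (x - z) ^ 2 +
       ((b - x) ^ 2 + (b - y) ^ 2 + (x - y) ^ 2) +
       ((c - y) ^ 2 + (c - z) ^ 2 + (y - z) ^ 2) =
       3 / 5 * ((a - b) ^ 2 + (b - c) ^ 2 + (a - c) ^ 2)) := by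
  constructor
  · intro x y z
    nlinarith [sq_nonneg (x - (2*a+2*b+c)/5), sq_nonneg (y - (a+2*b+2*c)/5),
      sq_nonneg (z - (2*a+b+2*c)/5),
      sq_nonneg (x + y + z - a - b - c),
      sq_nonneg (x - y - (a-c)/5), sq_nonneg (y - z - (b-a)/5),
      sq_nonneg (x - z - (b-c)/5)]
  · ring
end

section
/- The limit f of the sequence (f_n) defined by the self-similar recursion f_{n+1}(x) = (2/7)f_n(3x) on [0,1/3], (3/7)f_n(3x−1)+2/7 on (1/3,2/3], (2/7)f_n(3x−2)+5/7 on (2/3,1], with f₀(x)=x, is a strictly increasing continuous function on [0,1] with f(0)=0 and f(1)=1. -/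
/-!
Each `f_n` is continuous and strictly increasing on `[0,1]` with `f_n 0 = 0` and `f_n 1 = 1`: on
each third of `[0,1]` the function `f_{n+1}` is an increasing affine image of `f_n`, and the pieces
match at `1/3` and `2/3` because `f_n` fixes `0` and `1`. The same matching shows that `f_{n+k}`
and `f_n` agree at the triadic points `i / 3^n`, so the limit `f` agrees with `f_n` there. Hence `f`
is continuous (uniform limit), monotone (pointwise limit), and strictly increasing along the
triadic points of each level; since every nondegenerate interval contains two consecutive triadic
points of some level, `f` is strictly increasing.
-/

open Set Filter Topology

structure IsUnitIntervalHomeomorph (g : ℝ → ℝ) : Prop where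
  map_zero : g 0 = 0
  map_one : g 1 = 1
  strictMonoOn : StrictMonoOn g (Icc 0 1)
  continuousOn : ContinuousOn g (Icc 0 1)

def IsTriadicRefinement (p q r : ℝ) (g h : ℝ → ℝ) : Prop :=
  ∀ x ∈ Icc (0 : ℝ) 1,
    (x ≤ 1 / 3 → h x = p * g (3 * x)) ∧
    (1 / 3 < x → x ≤ 2 / 3 → h x = q * g (3 * x - 1) + p) ∧
    (2 / 3 < x → h x = r * g (3 * x - 2) + (p + q))

def triadicPoints (n : ℕ) : Set ℝ := {x ∈ Icc 0 1 | ∃ i : ℤ, x = i / 3 ^ n}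

lemma mem_triadicPoints_zero {x : ℝ} : x ∈ triadicPoints 0 ↔ x = 0 ∨ x = 1 := by
  constructor
  · rintro ⟨⟨hx0, hx1⟩, i, rfl⟩
    simp only [pow_zero, div_one] at hx0 hx1 ⊢
    have hi0 : 0 ≤ i := by exact_mod_cast hx0
    have hi1 : i ≤ 1 := by exact_mod_cast hx1
    rcases (by omega : i = 0 ∨ i = 1) with rfl | rfl <;> simp
  · rintro (rfl | rfl)
    · exact ⟨left_mem_Icc.2 zero_le_one, 0, by simp⟩
    · exact ⟨right_mem_Icc.2 zero_le_one, 1, by simp⟩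

lemma three_mul_sub_mem_triadicPoints {n : ℕ} {x : ℝ} (hx : x ∈ triadicPoints (n + 1)) (k : ℤ)
    (hk : 3 * x - k ∈ Icc (0 : ℝ) 1) : 3 * x - k ∈ triadicPoints n := by
  obtain ⟨-, i, rfl⟩ := hx
  refine ⟨hk, i - k * 3 ^ n, ?_⟩
  push_cast
  field_simp
  ring

lemma exists_consecutive_div_pow_between {b x y : ℝ} (hb : 1 < b) (hxy : x < y) :
    ∃ n : ℕ, ∃ i : ℤ, x ≤ i / b ^ n ∧ (i + 1) / b ^ n ≤ y := by
  obtain ⟨n, hn⟩ := pow_unbounded_of_one_lt (2 / (y - x)) hb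
  have hbn : 0 < b ^ n := pow_pos (by linarith) n
  refine ⟨n, ⌈x * b ^ n⌉, ?_, ?_⟩
  · rw [le_div_iff₀ hbn]
    exact Int.le_ceil _
  · rw [div_le_iff₀ hbn]
    rw [div_lt_iff₀ (sub_pos.2 hxy)] at hn
    linarith [Int.ceil_lt_add_one (x * b ^ n)]

lemma MonotoneOn.strictMonoOn_of_forall_strictMonoOn_triadicPoints {f : ℝ → ℝ}
    (hmono : MonotoneOn f (Icc 0 1)) (htri : ∀ n, StrictMonoOn f (triadicPoints n)) :
    StrictMonoOn f (Icc 0 1) := by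
  intro x hx y hy hxy
  obtain ⟨n, i, hxi, hiy⟩ := exists_consecutive_div_pow_between (by norm_num : (1 : ℝ) < 3) hxy
  have hlt : (i : ℝ) / 3 ^ n < (i + 1) / 3 ^ n :=
    div_lt_div_of_pos_right (lt_add_one _) (by positivity)
  have hi : (i : ℝ) / 3 ^ n ∈ triadicPoints n := ⟨⟨hx.1.trans hxi, by linarith [hy.2]⟩, i, rfl⟩
  have hi' : ((i : ℝ) + 1) / 3 ^ n ∈ triadicPoints n :=
    ⟨⟨by linarith [hx.1], hiy.trans hy.2⟩, i + 1, by push_cast; rfl⟩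
  calc f x ≤ f (i / 3 ^ n) := hmono hx hi.1 hxi
    _ < f ((i + 1) / 3 ^ n) := htri n hi hi' hlt
    _ ≤ f y := hmono hi'.1 hy hiy

lemma mapsTo_three_mul_Icc : MapsTo (3 * ·) (Icc (0 : ℝ) (1 / 3)) (Icc 0 1) :=
  fun _ hx => ⟨by linarith [hx.1], by linarith [hx.2]⟩

lemma mapsTo_three_mul_sub_one_Icc : MapsTo (3 * · - 1) (Icc (1 / 3 : ℝ) (2 / 3)) (Icc 0 1) :=
  fun _ hx => ⟨by linarith [hx.1], by linarith [hx.2]⟩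

lemma mapsTo_three_mul_sub_two_Icc : MapsTo (3 * · - 2) (Icc (2 / 3 : ℝ) 1) (Icc 0 1) :=
  fun _ hx => ⟨by linarith [hx.1], by linarith [hx.2]⟩

namespace IsTriadicRefinement

variable {p q r : ℝ} {g h : ℝ → ℝ}

lemma map_zero (H : IsTriadicRefinement p q r g h) (hg : g 0 = 0) : h 0 = 0 := by
  rw [(H 0 (left_mem_Icc.2 zero_le_one)).1 (by norm_num)]
  simp [hg]

lemma map_one (H : IsTriadicRefinement p q r g h) (hpqr : p + q + r = 1) (hg : g 1 = 1) :
    h 1 = 1 := by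
  rw [(H 1 (right_mem_Icc.2 zero_le_one)).2.2 (by norm_num)]
  norm_num [hg]
  linarith

lemma eqOn_left (H : IsTriadicRefinement p q r g h) :
    EqOn h (fun x => p * g (3 * x)) (Icc 0 (1 / 3)) :=
  fun x hx => (H x ⟨hx.1, by linarith [hx.2]⟩).1 hx.2

lemma eqOn_middle (H : IsTriadicRefinement p q r g h) (hg0 : g 0 = 0) (hg1 : g 1 = 1) :
    EqOn h (fun x => q * g (3 * x - 1) + p) (Icc (1 / 3) (2 / 3)) := by
  rintro x ⟨hx1, hx2⟩
  rcases hx1.eq_or_lt with rfl | hx1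
  · rw [H.eqOn_left ⟨by norm_num, le_rfl⟩]
    norm_num [hg0, hg1]
  · exact (H x ⟨by linarith, by linarith⟩).2.1 hx1 hx2

lemma eqOn_right (H : IsTriadicRefinement p q r g h) (hg0 : g 0 = 0) (hg1 : g 1 = 1) :
    EqOn h (fun x => r * g (3 * x - 2) + (p + q)) (Icc (2 / 3) 1) := by
  rintro x ⟨hx1, hx2⟩
  rcases hx1.eq_or_lt with rfl | hx1
  · rw [H.eqOn_middle hg0 hg1 ⟨by norm_num, le_rfl⟩]
    norm_num [hg0, hg1]
    ring
  · exact (H x ⟨by linarith, hx2⟩).2.2 hx1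

lemma strictMonoOn (H : IsTriadicRefinement p q r g h) (hp : 0 < p) (hq : 0 < q) (hr : 0 < r)
    (hg0 : g 0 = 0) (hg1 : g 1 = 1) (hg : StrictMonoOn g (Icc 0 1)) :
    StrictMonoOn h (Icc 0 1) := by
  have left : StrictMonoOn h (Icc 0 (1 / 3)) := fun x hx y hy hxy => by
    rw [H.eqOn_left hx, H.eqOn_left hy]
    exact mul_lt_mul_of_pos_left
      (hg (mapsTo_three_mul_Icc hx) (mapsTo_three_mul_Icc hy) (by linarith)) hp
  have middle : StrictMonoOn h (Icc (1 / 3) (2 / 3)) := fun x hx y hy hxy => by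
    rw [H.eqOn_middle hg0 hg1 hx, H.eqOn_middle hg0 hg1 hy]
    exact add_lt_add_left (mul_lt_mul_of_pos_left (hg (mapsTo_three_mul_sub_one_Icc hx)
      (mapsTo_three_mul_sub_one_Icc hy) (by linarith)) hq) p
  have right : StrictMonoOn h (Icc (2 / 3) 1) := fun x hx y hy hxy => by
    rw [H.eqOn_right hg0 hg1 hx, H.eqOn_right hg0 hg1 hy]
    exact add_lt_add_left (mul_lt_mul_of_pos_left (hg (mapsTo_three_mul_sub_two_Icc hx)
      (mapsTo_three_mul_sub_two_Icc hy) (by linarith)) hr) (p + q)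
  have left_middle : StrictMonoOn h (Icc 0 (2 / 3)) := by
    rw [← Icc_union_Icc_eq_Icc (b := 1 / 3) (by norm_num) (by norm_num)]
    exact left.union middle (isGreatest_Icc (by norm_num)) (isLeast_Icc (by norm_num))
  rw [← Icc_union_Icc_eq_Icc (b := 2 / 3) (by norm_num) (by norm_num)]
  exact left_middle.union right (isGreatest_Icc (by norm_num)) (isLeast_Icc (by norm_num))

lemma continuousOn (H : IsTriadicRefinement p q r g h) (hg0 : g 0 = 0) (hg1 : g 1 = 1)
    (hg : ContinuousOn g (Icc 0 1)) : ContinuousOn h (Icc 0 1) := by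
  have left : ContinuousOn h (Icc 0 (1 / 3)) :=
    (continuousOn_const.mul (hg.comp (by fun_prop) mapsTo_three_mul_Icc)).congr H.eqOn_left
  have middle : ContinuousOn h (Icc (1 / 3) (2 / 3)) :=
    ((continuousOn_const.mul (hg.comp (by fun_prop) mapsTo_three_mul_sub_one_Icc)).add
      continuousOn_const).congr (H.eqOn_middle hg0 hg1)
  have right : ContinuousOn h (Icc (2 / 3) 1) :=
    ((continuousOn_const.mul (hg.comp (by fun_prop) mapsTo_three_mul_sub_two_Icc)).add
      continuousOn_const).congr (H.eqOn_right hg0 hg1)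
  rw [← Icc_union_Icc_eq_Icc (b := 2 / 3) (by norm_num) (by norm_num),
    ← Icc_union_Icc_eq_Icc (a := 0) (b := 1 / 3) (by norm_num) (by norm_num)]
  exact (left.union_of_isClosed middle isClosed_Icc isClosed_Icc).union_of_isClosed right
    (isClosed_Icc.union isClosed_Icc) isClosed_Icc

lemma isUnitIntervalHomeomorph (H : IsTriadicRefinement p q r g h) (hp : 0 < p) (hq : 0 < q)
    (hr : 0 < r) (hpqr : p + q + r = 1) (hg : IsUnitIntervalHomeomorph g) :
    IsUnitIntervalHomeomorph h where
  map_zero := H.map_zero hg.map_zero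
  map_one := H.map_one hpqr hg.map_one
  strictMonoOn := H.strictMonoOn hp hq hr hg.map_zero hg.map_one hg.strictMonoOn
  continuousOn := H.continuousOn hg.map_zero hg.map_one hg.continuousOn

lemma eqOn_triadicPoints {g' h' : ℝ → ℝ} (H : IsTriadicRefinement p q r g h)
    (H' : IsTriadicRefinement p q r g' h') {n : ℕ} (hgg' : EqOn g g' (triadicPoints n)) :
    EqOn h h' (triadicPoints (n + 1)) := by
  intro x hx
  have hsub (k : ℤ) (hk : 3 * x - k ∈ Icc (0 : ℝ) 1) : g (3 * x - k) = g' (3 * x - k) :=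
    hgg' (three_mul_sub_mem_triadicPoints hx k hk)
  obtain ⟨hx0, hx1⟩ := hx.1
  obtain ⟨hl, hm, hr⟩ := H x hx.1
  obtain ⟨hl', hm', hr'⟩ := H' x hx.1
  rcases le_or_gt x (1 / 3) with h1 | h1
  · have h3x := hsub 0 ⟨by simp; linarith, by simp; linarith⟩
    simp only [Int.cast_zero, sub_zero] at h3x
    rw [hl h1, hl' h1, h3x]
  rcases le_or_gt x (2 / 3) with h2 | h2
  · have h3x := hsub 1 ⟨by simp; linarith, by simp; linarith⟩
    simp only [Int.cast_one] at h3x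
    rw [hm h1 h2, hm' h1 h2, h3x]
  · have h3x := hsub 2 ⟨by simp; linarith, by simp; linarith⟩
    simp only [Int.cast_ofNat] at h3x
    rw [hr h2, hr' h2, h3x]

end IsTriadicRefinement

section Sequence

variable {p q r : ℝ} {F : ℕ → ℝ → ℝ}

lemma eqOn_add_triadicPoints (hF : ∀ n, IsTriadicRefinement p q r (F n) (F (n + 1)))
    (hF0 : ∀ n, F n 0 = 0) (hF1 : ∀ n, F n 1 = 1) (n k : ℕ) :
    EqOn (F (n + k)) (F n) (triadicPoints n) := by
  induction n with
  | zero =>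
    intro x hx
    rcases mem_triadicPoints_zero.1 hx with rfl | rfl <;> simp [hF0, hF1]
  | succ n ih =>
    rw [Nat.add_right_comm]
    exact (hF (n + k)).eqOn_triadicPoints (hF n) ih

lemma eqOn_triadicPoints_of_tendsto (hF : ∀ n, IsTriadicRefinement p q r (F n) (F (n + 1)))
    (hF0 : ∀ n, F n 0 = 0) (hF1 : ∀ n, F n 1 = 1) {f : ℝ → ℝ}
    (hlim : ∀ x ∈ Icc (0 : ℝ) 1, Tendsto (fun n => F n x) atTop (𝓝 (f x))) (n : ℕ) :
    EqOn f (F n) (triadicPoints n) := by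
  intro x hx
  refine tendsto_nhds_unique (hlim x hx.1) (tendsto_const_nhds.congr' ?_)
  filter_upwards [eventually_ge_atTop n] with m hm
  obtain ⟨k, rfl⟩ := Nat.exists_eq_add_of_le hm
  exact (eqOn_add_triadicPoints hF hF0 hF1 n k hx).symm

end Sequence

/-- The uniform limit `f` of the sequence `(f_n)` defined by `f₀(x) = x` and the
self-similar recursion with weights `2/7, 3/7, 2/7` is a strictly increasing
continuous function on `[0,1]` with `f(0) = 0` and `f(1) = 1`. -/
theorem stmt11 (fN : ℕ → ℝ → ℝ) (f : ℝ → ℝ)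
    (h0 : ∀ x ∈ Set.Icc (0 : ℝ) 1, fN 0 x = x)
    (hrec : ∀ n : ℕ, ∀ x ∈ Set.Icc (0 : ℝ) 1,
      (x ≤ 1 / 3 → fN (n + 1) x = 2 / 7 * fN n (3 * x)) ∧
      (1 / 3 < x → x ≤ 2 / 3 → fN (n + 1) x = 3 / 7 * fN n (3 * x - 1) + 2 / 7) ∧
      (2 / 3 < x → fN (n + 1) x = 2 / 7 * fN n (3 * x - 2) + 5 / 7))
    (hconv : TendstoUniformlyOn (fun n => fN n) f Filter.atTop (Set.Icc 0 1)) :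
    StrictMonoOn f (Set.Icc (0 : ℝ) 1) ∧ ContinuousOn f (Set.Icc (0 : ℝ) 1) ∧
      f 0 = 0 ∧ f 1 = 1 := by
  have hF : ∀ n, IsTriadicRefinement (2 / 7) (3 / 7) (2 / 7) (fN n) (fN (n + 1)) :=
    fun n x hx => by
      rw [show (2 / 7 : ℝ) + 3 / 7 = 5 / 7 by norm_num]
      exact hrec n x hx
  have hfN : ∀ n, IsUnitIntervalHomeomorph (fN n) := by
    intro n
    induction n with
    | zero =>
      exact ⟨h0 0 (left_mem_Icc.2 zero_le_one), h0 1 (right_mem_Icc.2 zero_le_one),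
        strictMonoOn_id.congr fun x hx => (h0 x hx).symm, continuousOn_id.congr h0⟩
    | succ n ih =>
      exact (hF n).isUnitIntervalHomeomorph (by norm_num) (by norm_num) (by norm_num)
        (by norm_num) ih
  have hlim := fun x (hx : x ∈ Icc (0 : ℝ) 1) => hconv.tendsto_at hx
  have htri := eqOn_triadicPoints_of_tendsto hF (fun n => (hfN n).map_zero)
    (fun n => (hfN n).map_one) hlim
  have hmono : MonotoneOn f (Icc 0 1) := monotoneOn_of_frequently_monotoneOn_of_tendsto
    (Frequently.of_forall fun n => (hfN n).strictMonoOn.monotoneOn) hlim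
  refine ⟨hmono.strictMonoOn_of_forall_strictMonoOn_triadicPoints fun n =>
      ((hfN n).strictMonoOn.mono fun _ hx => hx.1).congr (htri n).symm,
    hconv.continuousOn (Frequently.of_forall fun n => (hfN n).continuousOn), ?_, ?_⟩
  · exact (htri 0 (mem_triadicPoints_zero.2 (Or.inl rfl))).trans (hfN 0).map_zero
  · exact (htri 0 (mem_triadicPoints_zero.2 (Or.inr rfl))).trans (hfN 0).map_one
end

section
/- Let Z be a transient reversible random walk started at o with Green function G and F(x,o) = λ^{|x|} (the probability of ever hitting o from x). With m(x) = (c/(3λ))^{|x|} and 0 < c < λ < 1, the expected lifetime of the associated variable speed continuous time random walk satisfies E_o ζ = (G(o,o)/π(o))·∑_{n=0}^∞ c^n = G(o,o)/(π(o)(1−c)) < +∞. -/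
/-! By reversibility and `F(x,o) = λ^{|x|}`, the summand `(m(x)/π(x)) G(o,x)` equals
`(G(o,o)/π(o)) (c/3)^{|x|}`. There are `3^n` words of length `n`, so summing over the
fibres of the length map turns the sum over all words into the geometric series `∑ c^n`. -/

theorem hasSum_pow_length {α : Type*} [Fintype α] {r : ℝ} (hr : 0 ≤ r)
    (h : Fintype.card α * r < 1) :
    HasSum (fun x : List α => r ^ x.length) (1 - Fintype.card α * r)⁻¹ := by
  have hfiber (n : ℕ) :
      HasSum (fun x : {x : List α // x.length = n} => r ^ x.1.length)
        ((Fintype.card α * r) ^ n) := by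
    let _ : Fintype {x : List α // x.length = n} := inferInstanceAs (Fintype (List.Vector α n))
    have hcard : Fintype.card {x : List α // x.length = n} = Fintype.card α ^ n := card_vector n
    have hconst : (fun x : {x : List α // x.length = n} => r ^ x.1.length) = fun _ => r ^ n :=
      funext fun x => by rw [x.2]
    simpa [hconst, mul_pow, hcard] using
      hasSum_fintype fun _ : {x : List α // x.length = n} => r ^ n
  have hsigma : Summable fun p : Σ n, {x : List α // x.length = n} => r ^ p.2.1.length :=
    (summable_sigma_of_nonneg fun _ => by positivity).2
      ⟨fun n => (hfiber n).summable,
        by simpa only [(hfiber _).tsum_eq] using summable_geometric_of_lt_one (by positivity) h⟩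
  have hvalue : ∑' p : Σ n, {x : List α // x.length = n}, r ^ p.2.1.length =
      (1 - Fintype.card α * r)⁻¹ :=
    (hsigma.hasSum.sigma hfiber).unique (hasSum_geometric_of_lt_one (by positivity) h)
  rw [← (Equiv.sigmaFiberEquiv List.length).hasSum_iff, ← hvalue]
  exact hsigma.hasSum

theorem stmt18_general (l cc : ℝ) (hc : 0 < cc) (hcl : cc < l) (hl : l < 1)
    (π : List (Fin 3) → ℝ) (G : List (Fin 3) → List (Fin 3) → ℝ)
    (hπpos : ∀ x, 0 < π x)
    (hrev : ∀ x, π [] * G [] x = π x * G x [])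
    (hF : ∀ x, G x [] = l ^ x.length * G [] [])
    (m : List (Fin 3) → ℝ) (hm : ∀ x, m x = (cc / (3 * l)) ^ x.length) :
    Summable (fun x : List (Fin 3) => m x / π x * G [] x) ∧
    (∑' x : List (Fin 3), m x / π x * G [] x = G [] [] / π [] * ∑' n : ℕ, cc ^ n) ∧
    (∑' x : List (Fin 3), m x / π x * G [] x = G [] [] / (π [] * (1 - cc))) := by
  have hl0 : 0 < l := hc.trans hcl
  have hc1 : cc < 1 := hcl.trans hl
  have hterm (x : List (Fin 3)) : m x / π x * G [] x = G [] [] / π [] * (cc / 3) ^ x.length := by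
    have hG : G [] x = π x * (l ^ x.length * G [] []) / π [] := by
      rw [eq_div_iff (hπpos []).ne', ← hF, ← hrev]; ring
    have hscale : cc / (3 * l) * l = cc / 3 := by field_simp
    rw [hm, hG, ← hscale, mul_pow]
    field_simp [(hπpos x).ne', (hπpos []).ne']
  have hsum : HasSum (fun x : List (Fin 3) => m x / π x * G [] x)
      (G [] [] / π [] * (1 - cc)⁻¹) := by
    have h3 : (Fintype.card (Fin 3) : ℝ) * (cc / 3) = cc := by simp; ring
    have hwords := hasSum_pow_length (α := Fin 3) (r := cc / 3) (by positivity) (by rwa [h3])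
    rw [h3] at hwords
    simpa only [hterm] using hwords.mul_left (G [] [] / π [])
  have hgeom : ∑' n : ℕ, cc ^ n = (1 - cc)⁻¹ := tsum_geometric_of_lt_one hc.le hc1
  refine ⟨hsum.summable, by rw [hsum.tsum_eq, hgeom], ?_⟩
  rw [hsum.tsum_eq, div_mul_eq_div_div, div_eq_mul_inv (G [] [] / π [])]

/-- Expected lifetime of the variable speed continuous time random walk on the
Sierpiński graph (vertices = finite words over a three-letter alphabet, root
`o = []`). Given the Green function `G` of the transient reversible random walk
with reversible measure `π`, hitting probabilities `F(x,o) = λ^{|x|}` (so that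
`G(x,o) = λ^{|x|} G(o,o)`), and speed measure `m(x) = (c/(3λ))^{|x|}` with
`0 < c < λ < 1`, the expected lifetime
`E_o ζ = ∑_{x∈X} (m(x)/π(x)) G(o,x)` equals
`(G(o,o)/π(o))·∑_{n≥0} c^n = G(o,o)/(π(o)(1−c)) < ∞`. -/
theorem stmt18 (l cc : ℝ) (hc : 0 < cc) (hcl : cc < l) (hl : l < 1)
    (π : List (Fin 3) → ℝ) (G : List (Fin 3) → List (Fin 3) → ℝ)
    (hπpos : ∀ x, 0 < π x)
    (hGpos : 0 < G [] [])
    (hrev : ∀ x, π [] * G [] x = π x * G x [])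
    (hF : ∀ x, G x [] = l ^ x.length * G [] [])
    (m : List (Fin 3) → ℝ) (hm : ∀ x, m x = (cc / (3 * l)) ^ x.length) :
    Summable (fun x : List (Fin 3) => m x / π x * G [] x) ∧
    (∑' x : List (Fin 3), m x / π x * G [] x = G [] [] / π [] * ∑' n : ℕ, cc ^ n) ∧
    (∑' x : List (Fin 3), m x / π x * G [] x = G [] [] / (π [] * (1 - cc))) :=
  stmt18_general l cc hc hcl hl π G hπpos hrev hF m hm
end
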